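/- arXiv:2307.00795 — 3 statements merged into one kernel-verified Lean document; each statement's English description precedes it below -/
import Mathlib

section
/- Let $\Sigma$ and $\hat\Sigma$ be symmetric positive definite $d\times d$ matrices, let $\beta \in \mathbb{R}^d$, and let $v = \frac{1}{n}\sum_{i=1}^n X_i(Y_i - X_i^\top \beta)$ where $X_i \in \mathbb{R}^d$, $Y_i \in \mathbb{R}$. Define the remainder $\mathcal{R} = \hat\Sigma^{-1}(\Sigma - \hat\Sigma)\Sigma^{-1}(\Sigma - \hat\Sigma)\Sigma^{-1} v$ and $\mathcal{D}_\Sigma = \|\Sigma^{-1/2}\hat\Sigma\Sigma^{-1/2} - I_d\|_{\mathrm{op}}$. Then $\|\mathcal{R}\|_\Sigma \leq \frac{\mathcal{D}_\Sigma^2}{\lambda_{\min}(\Sigma^{-1/2}\hat\Sigma\Sigma^{-1/2})}\left\|\frac{1}{n}\sum_{i=1}^n \Sigma^{-1/2}X_i(Y_i - X_i^\top\beta)\right\|_2$. -/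
/-!
Let `Q = Σ^{1/2}` (in Mathlib, `cfc Real.sqrt Σ`) and `A = Q⁻¹ Σ̂ Q⁻¹`. Then `‖R‖_Σ = ‖Q R‖₂`,
and since `A - 1 = -Q⁻¹ (Σ - Σ̂) Q⁻¹` and `A⁻¹ = Q Σ̂⁻¹ Q`, one computes
`Q R = A⁻¹ (A - 1)² Q⁻¹ v`. The operator norm bounds `(A - 1)²` by `𝒟_Σ²`, and
`‖A⁻¹ w‖₂ ≤ ‖w‖₂ / λ_min(A)` because `λ_min(A) ‖y‖₂² ≤ ⟪y, A y⟫ ≤ ‖y‖₂ ‖A y‖₂`.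
-/

open Matrix

/-- Operator norm (ℓ²→ℓ² norm) of a real square matrix. -/
noncomputable def opNorm {d : ℕ} (A : Matrix (Fin d) (Fin d) ℝ) : ℝ :=
  ‖Matrix.toEuclideanCLM (𝕜 := ℝ) A‖

/-- Smallest eigenvalue of a symmetric matrix, via the Rayleigh quotient. -/
noncomputable def lamMin {d : ℕ} (A : Matrix (Fin d) (Fin d) ℝ) : ℝ :=
  ⨅ u : {v : Fin d → ℝ // ∑ i, v i ^ 2 = 1}, (u.1 ⬝ᵥ A.mulVec u.1)

open WithLp
open scoped Matrix.Norms.L2Operator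

-- `ι → ℝ` carries the sup norm; `‖x‖₂` is the Euclidean norm of `x`.
local notation "‖" x "‖₂" => ‖(toLp 2 x : EuclideanSpace ℝ _)‖

section EuclideanNorm

variable {ι : Type*} [Fintype ι]

lemma norm_toLp_eq_sqrt (x : ι → ℝ) : ‖x‖₂ = √(∑ i, x i ^ 2) := by
  simp [EuclideanSpace.norm_eq]

lemma dotProduct_self_eq_norm_toLp_sq (x : ι → ℝ) : x ⬝ᵥ x = ‖x‖₂ ^ 2 := by
  rw [← real_inner_self_eq_norm_sq, EuclideanSpace.inner_eq_star_dotProduct]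
  simp

lemma abs_dotProduct_le (x y : ι → ℝ) : |x ⬝ᵥ y| ≤ ‖x‖₂ * ‖y‖₂ := by
  simpa [EuclideanSpace.inner_eq_star_dotProduct, dotProduct_comm] using
    abs_real_inner_le_norm (toLp 2 x : EuclideanSpace ℝ ι) (toLp 2 y)

lemma sqrt_dotProduct_mul_self_mulVec [DecidableEq ι] {Q : Matrix ι ι ℝ} (hQ : Q.IsHermitian)
    (x : ι → ℝ) : √(x ⬝ᵥ (Q * Q) *ᵥ x) = ‖Q *ᵥ x‖₂ := by
  have hQt : Qᵀ = Q := by simpa [conjTranspose_eq_transpose_of_trivial] using hQ.eq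
  rw [← mulVec_mulVec, dotProduct_mulVec, ← mulVec_transpose, hQt,
    dotProduct_self_eq_norm_toLp_sq, Real.sqrt_sq (norm_nonneg _)]

end EuclideanNorm

section OpNormLamMin

variable {d : ℕ}

lemma norm_toLp_mulVec_le (A : Matrix (Fin d) (Fin d) ℝ) (x : Fin d → ℝ) :
    ‖A *ᵥ x‖₂ ≤ opNorm A * ‖x‖₂ :=
  A.l2_opNorm_mulVec (toLp 2 x)

lemma opNorm_mul_le (A B : Matrix (Fin d) (Fin d) ℝ) : opNorm (A * B) ≤ opNorm A * opNorm B :=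
  l2_opNorm_mul A B

lemma bddBelow_rayleigh (A : Matrix (Fin d) (Fin d) ℝ) :
    BddBelow (Set.range fun u : {v : Fin d → ℝ // ∑ i, v i ^ 2 = 1} => u.1 ⬝ᵥ A *ᵥ u.1) := by
  refine ⟨-opNorm A, ?_⟩
  rintro _ ⟨⟨u, hu⟩, rfl⟩
  have hu1 : ‖u‖₂ = 1 := by rw [norm_toLp_eq_sqrt, hu, Real.sqrt_one]
  have h := (abs_dotProduct_le u (A *ᵥ u)).trans
    (mul_le_mul_of_nonneg_left (norm_toLp_mulVec_le A u) (norm_nonneg _))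
  rw [hu1, one_mul, mul_one] at h
  linarith [neg_abs_le (u ⬝ᵥ A *ᵥ u)]

lemma lamMin_mul_norm_toLp_sq_le (A : Matrix (Fin d) (Fin d) ℝ) (x : Fin d → ℝ) :
    lamMin A * ‖x‖₂ ^ 2 ≤ x ⬝ᵥ A *ᵥ x := by
  rcases eq_or_ne x 0 with rfl | hx
  · simp
  set r := ‖x‖₂
  have hr : 0 < r := by simpa [r] using hx
  have hunit : ∑ i, (r⁻¹ • x) i ^ 2 = 1 := by
    rw [← Real.sqrt_eq_one, ← norm_toLp_eq_sqrt, toLp_smul, norm_smul, norm_inv, norm_norm,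
      inv_mul_cancel₀ hr.ne']
  have h := ciInf_le (bddBelow_rayleigh A) ⟨r⁻¹ • x, hunit⟩
  simp only [mulVec_smul, smul_dotProduct, dotProduct_smul, smul_eq_mul] at h
  calc lamMin A * r ^ 2 ≤ r⁻¹ * (r⁻¹ * (x ⬝ᵥ A *ᵥ x)) * r ^ 2 := by gcongr; exact h
    _ = x ⬝ᵥ A *ᵥ x := by field_simp

lemma lamMin_mul_norm_toLp_le (A : Matrix (Fin d) (Fin d) ℝ) (x : Fin d → ℝ) :
    lamMin A * ‖x‖₂ ≤ ‖A *ᵥ x‖₂ := by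
  rcases (norm_nonneg (toLp 2 x : EuclideanSpace ℝ (Fin d))).eq_or_lt with h | h
  · rw [← h, mul_zero]
    exact norm_nonneg _
  refine le_of_mul_le_mul_right ?_ h
  calc lamMin A * ‖x‖₂ * ‖x‖₂ = lamMin A * ‖x‖₂ ^ 2 := by ring
    _ ≤ x ⬝ᵥ A *ᵥ x := lamMin_mul_norm_toLp_sq_le A x
    _ ≤ ‖x‖₂ * ‖A *ᵥ x‖₂ := (le_abs_self _).trans (abs_dotProduct_le _ _)
    _ = ‖A *ᵥ x‖₂ * ‖x‖₂ := mul_comm _ _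

lemma Matrix.PosSemidef.lamMin_nonneg {A : Matrix (Fin d) (Fin d) ℝ} (hA : A.PosSemidef) :
    0 ≤ lamMin A :=
  Real.iInf_nonneg fun u => by simpa using hA.dotProduct_mulVec_nonneg u.1

lemma Matrix.PosDef.lamMin_pos [NeZero d] {A : Matrix (Fin d) (Fin d) ℝ} (hA : A.PosDef) :
    0 < lamMin A := by
  let f : EuclideanSpace ℝ (Fin d) → ℝ := fun x => ofLp x ⬝ᵥ A *ᵥ ofLp x
  obtain ⟨x₀, hx₀, hmin⟩ := (isCompact_sphere (0 : EuclideanSpace ℝ (Fin d)) 1).exists_isMinOn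
    (NormedSpace.sphere_nonempty.2 zero_le_one) (by fun_prop : Continuous f).continuousOn
  have hsphere {x : Fin d → ℝ} : toLp 2 x ∈ Metric.sphere (0 : EuclideanSpace ℝ (Fin d)) 1 ↔
      ∑ i, x i ^ 2 = 1 := by
    rw [mem_sphere_zero_iff_norm, norm_toLp_eq_sqrt, Real.sqrt_eq_one]
  have : Nonempty {v : Fin d → ℝ // ∑ i, v i ^ 2 = 1} := ⟨⟨ofLp x₀, hsphere.1 hx₀⟩⟩
  have hx₀ : ofLp x₀ ≠ 0 := fun h => by
    simp [show x₀ = 0 from ofLp_injective 2 h] at hx₀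
  exact (by simpa using hA.dotProduct_mulVec_pos hx₀ : 0 < f x₀).trans_le
    (le_ciInf fun u => hmin (hsphere.2 u.2))

lemma Matrix.PosDef.norm_inv_mulVec_le {A : Matrix (Fin d) (Fin d) ℝ} (hA : A.PosDef)
    (x : Fin d → ℝ) : ‖A⁻¹ *ᵥ x‖₂ ≤ ‖x‖₂ / lamMin A := by
  -- For `d = 0`, `lamMin A` is an infimum over an empty type, hence `0`; both sides vanish.
  rcases Nat.eq_zero_or_pos d with rfl | hd
  · obtain rfl := Subsingleton.elim x 0
    simp [EuclideanSpace.norm_eq]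
  have : NeZero d := ⟨hd.ne'⟩
  rw [le_div_iff₀ hA.lamMin_pos, mul_comm]
  simpa [mulVec_mulVec, mul_nonsing_inv _ hA.det_pos.ne'.isUnit] using
    lamMin_mul_norm_toLp_le A (A⁻¹ *ᵥ x)

end OpNormLamMin

section SecondOrderRemainder

variable {n α : Type*} [Fintype n] [DecidableEq n] [CommRing α]

noncomputable def secondOrderRemainder (S T : Matrix n n α) : Matrix n n α :=
  T⁻¹ * (S - T) * S⁻¹ * (S - T) * S⁻¹

lemma mul_secondOrderRemainder_eq {Q S T : Matrix n n α} (hQ : IsUnit Q.det) (hQS : Q * Q = S) :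
    Q * secondOrderRemainder S T = (Q⁻¹ * T * Q⁻¹)⁻¹ * (Q⁻¹ * T * Q⁻¹ - 1) ^ 2 * Q⁻¹ := by
  have hinv : (Q⁻¹ * T * Q⁻¹)⁻¹ = Q * T⁻¹ * Q := by
    rw [Matrix.mul_inv_rev, Matrix.mul_inv_rev, nonsing_inv_nonsing_inv Q hQ, Matrix.mul_assoc]
  have hsub : Q⁻¹ * T * Q⁻¹ - 1 = -(Q⁻¹ * (S - T) * Q⁻¹) := by
    have hwhite : Q⁻¹ * S * Q⁻¹ = 1 := by
      rw [← hQS, ← Matrix.mul_assoc, nonsing_inv_mul Q hQ, Matrix.one_mul, mul_nonsing_inv Q hQ]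
    rw [Matrix.mul_sub, Matrix.sub_mul, hwhite, neg_sub]
  have hSinv : S⁻¹ = Q⁻¹ * Q⁻¹ := by rw [← hQS, Matrix.mul_inv_rev]
  rw [secondOrderRemainder, hinv, hsub, neg_sq, sq, hSinv]
  simp only [Matrix.mul_assoc, mul_nonsing_inv_cancel_left _ _ hQ]

end SecondOrderRemainder

lemma Matrix.IsHermitian.spectral_sqrt_eq_cfc {n : Type*} [Fintype n] [DecidableEq n]
    {A : Matrix n n ℝ} (hA : A.IsHermitian) :
    (hA.eigenvectorUnitary : Matrix n n ℝ) * diagonal (Real.sqrt ∘ hA.eigenvalues) *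
      (star hA.eigenvectorUnitary : Matrix n n ℝ) = cfc Real.sqrt A := by
  rw [hA.cfc_eq, IsHermitian.cfc, Unitary.conjStarAlgAut_apply]
  rfl

lemma Matrix.PosSemidef.cfc_sqrt_mul_self {n : Type*} [Fintype n] [DecidableEq n]
    {A : Matrix n n ℝ} (hA : A.PosSemidef) : cfc Real.sqrt A * cfc Real.sqrt A = A := by
  conv_rhs => rw [← cfc_id' ℝ A hA.isHermitian]
  rw [← cfc_mul ..]
  exact cfc_congr fun x hx =>
    Real.mul_self_sqrt ((posSemidef_iff_isHermitian_and_spectrum_nonneg.1 hA).2 hx)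

lemma Matrix.PosDef.inv_mul_mul_inv {n : Type*} [Fintype n] [DecidableEq n]
    {Q T : Matrix n n ℝ} (hQ : Q.IsHermitian) (hQdet : IsUnit Q.det) (hT : T.PosDef) :
    (Q⁻¹ * T * Q⁻¹).PosDef := by
  have hQinv : IsUnit Q⁻¹ := (isUnit_iff_isUnit_det _).2 (isUnit_nonsing_inv_det_iff.2 hQdet)
  have h := hT.conjTranspose_mul_mul_same (mulVec_injective_iff_isUnit.2 hQinv)
  rwa [hQ.inv.eq] at h

theorem norm_mul_secondOrderRemainder_mulVec_le {d : ℕ} {Q S T : Matrix (Fin d) (Fin d) ℝ}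
    (hQ : Q.IsHermitian) (hQdet : IsUnit Q.det) (hQS : Q * Q = S) (hT : T.PosDef)
    (v : Fin d → ℝ) :
    ‖Q *ᵥ secondOrderRemainder S T *ᵥ v‖₂ ≤
      opNorm (Q⁻¹ * T * Q⁻¹ - 1) ^ 2 / lamMin (Q⁻¹ * T * Q⁻¹) * ‖Q⁻¹ *ᵥ v‖₂ := by
  set A := Q⁻¹ * T * Q⁻¹
  have hA : A.PosDef := hT.inv_mul_mul_inv hQ hQdet
  rw [mulVec_mulVec, mul_secondOrderRemainder_eq hQdet hQS, ← mulVec_mulVec, ← mulVec_mulVec]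
  calc ‖A⁻¹ *ᵥ (A - 1) ^ 2 *ᵥ Q⁻¹ *ᵥ v‖₂ ≤ ‖(A - 1) ^ 2 *ᵥ Q⁻¹ *ᵥ v‖₂ / lamMin A :=
        hA.norm_inv_mulVec_le _
    _ ≤ opNorm (A - 1) ^ 2 * ‖Q⁻¹ *ᵥ v‖₂ / lamMin A := by
        have := hA.posSemidef.lamMin_nonneg
        gcongr
        calc ‖(A - 1) ^ 2 *ᵥ Q⁻¹ *ᵥ v‖₂ ≤ opNorm ((A - 1) ^ 2) * ‖Q⁻¹ *ᵥ v‖₂ :=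
              norm_toLp_mulVec_le _ _
          _ ≤ opNorm (A - 1) ^ 2 * ‖Q⁻¹ *ᵥ v‖₂ := by
              gcongr
              rw [sq, sq]
              exact opNorm_mul_le _ _
    _ = opNorm (A - 1) ^ 2 / lamMin A * ‖Q⁻¹ *ᵥ v‖₂ := by ring

theorem stmt2_general {d n : ℕ}
    (S Shat : Matrix (Fin d) (Fin d) ℝ) (hS : S.PosDef) (hShat : Shat.PosDef)
    (β : Fin d → ℝ) (X : Fin n → Fin d → ℝ) (Y : Fin n → ℝ) :
    let Risqr := ((hS.posSemidef.1.eigenvectorUnitary : Matrix (Fin d) (Fin d) ℝ) * diagonal (Real.sqrt ∘ hS.posSemidef.1.eigenvalues) *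
      (star hS.posSemidef.1.eigenvectorUnitary : Matrix (Fin d) (Fin d) ℝ))⁻¹
    let v : Fin d → ℝ := fun k => (1 / (n : ℝ)) * ∑ i, X i k * (Y i - X i ⬝ᵥ β)
    let Rem : Fin d → ℝ := (Shat⁻¹ * (S - Shat) * S⁻¹ * (S - Shat) * S⁻¹).mulVec v
    Real.sqrt (Rem ⬝ᵥ S.mulVec Rem) ≤
      opNorm (Risqr * Shat * Risqr - 1) ^ 2 / lamMin (Risqr * Shat * Risqr) *
        Real.sqrt (∑ k, ((1 / (n : ℝ)) * ∑ i, Risqr.mulVec (X i) k * (Y i - X i ⬝ᵥ β)) ^ 2) := by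
  intro Risqr v Rem
  set Q := cfc Real.sqrt S
  have hRisqr : Risqr = Q⁻¹ := congrArg (·⁻¹) hS.posSemidef.1.spectral_sqrt_eq_cfc
  have hQS : Q * Q = S := hS.posSemidef.cfc_sqrt_mul_self
  have hQ : Q.IsHermitian := cfc_predicate _ _
  have hQdet : IsUnit Q.det := by
    refine isUnit_iff_ne_zero.2 fun h => hS.det_pos.ne' ?_
    rw [← hQS, det_mul, h, zero_mul]
  have hwhite :
      (fun k => (1 / (n : ℝ)) * ∑ i, (Q⁻¹ *ᵥ X i) k * (Y i - X i ⬝ᵥ β)) = Q⁻¹ *ᵥ v := by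
    have hv : v = (1 / (n : ℝ)) • ∑ i, (Y i - X i ⬝ᵥ β) • X i := by
      ext k
      simp [v, Finset.sum_apply, mul_comm]
    ext k
    simp [hv, mulVec_smul, mulVec_sum, Finset.sum_apply, mul_comm]
  rw [hRisqr, ← hQS, sqrt_dotProduct_mul_self_mulVec hQ, ← norm_toLp_eq_sqrt, hwhite]
  exact norm_mul_secondOrderRemainder_mulVec_le hQ hQdet hQS hShat v

/-- Deterministic bound on the second-order remainder of the least-squares
expansion: with `v = (1/n)∑ᵢ Xᵢ(Yᵢ - Xᵢᵀβ)`,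
`R = Σ̂⁻¹(Σ - Σ̂)Σ⁻¹(Σ - Σ̂)Σ⁻¹ v` and `𝒟_Σ = ‖Σ^{-1/2}Σ̂Σ^{-1/2} - I‖_op`, one has
`‖R‖_Σ ≤ 𝒟_Σ² / λ_min(Σ^{-1/2}Σ̂Σ^{-1/2}) · ‖(1/n)∑ᵢ Σ^{-1/2}Xᵢ(Yᵢ - Xᵢᵀβ)‖₂`. -/
theorem stmt2 {d n : ℕ} (hn : 0 < n)
    (S Shat : Matrix (Fin d) (Fin d) ℝ) (hS : S.PosDef) (hShat : Shat.PosDef)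
    (β : Fin d → ℝ) (X : Fin n → Fin d → ℝ) (Y : Fin n → ℝ) :
    let Risqr := ((hS.posSemidef.1.eigenvectorUnitary : Matrix (Fin d) (Fin d) ℝ) * diagonal (Real.sqrt ∘ hS.posSemidef.1.eigenvalues) *
      (star hS.posSemidef.1.eigenvectorUnitary : Matrix (Fin d) (Fin d) ℝ))⁻¹
    let v : Fin d → ℝ := fun k => (1 / (n : ℝ)) * ∑ i, X i k * (Y i - X i ⬝ᵥ β)
    let Rem : Fin d → ℝ := (Shat⁻¹ * (S - Shat) * S⁻¹ * (S - Shat) * S⁻¹).mulVec v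
    Real.sqrt (Rem ⬝ᵥ S.mulVec Rem) ≤
      opNorm (Risqr * Shat * Risqr - 1) ^ 2 / lamMin (Risqr * Shat * Risqr) *
        Real.sqrt (∑ k, ((1 / (n : ℝ)) * ∑ i, Risqr.mulVec (X i) k * (Y i - X i ⬝ᵥ β)) ^ 2) :=
  stmt2_general S Shat hS hShat β X Y
end

section
/- Let $c \in \mathbb{R}^d$, let $\hat\beta^{(1)}, \ldots, \hat\beta^{(B)}$ be independent random vectors in $\mathbb{R}^d$, and let $\beta \in \mathbb{R}^d$ be fixed. Suppose for each $b$ the median bias satisfies $\frac{1}{2} - \min\{\mathbb{P}(c^\top(\hat\beta^{(b)} - \beta) > 0), \mathbb{P}(c^\top(\hat\beta^{(b)} - \beta) < 0)\} \leq \Delta$ for some $\Delta \in [0, 1/2]$. Then $\mathbb{P}\left(\min_{1\leq b\leq B} c^\top\hat\beta^{(b)} \leq c^\top\beta \leq \max_{1\leq b\leq B} c^\top\hat\beta^{(b)}\right) \geq 1 - \left(\frac{1}{2}-\Delta\right)^B - \left(\frac{1}{2}+\Delta\right)^B$. -/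
/-!
If `cᵀβ` lies outside the hull of the `cᵀβ̂⁽ᵇ⁾`, then all estimators fall strictly on one side
of it. By independence the probability of this is `∏ p_b + ∏ q_b`, where `p_b, q_b ≥ 1/2 - Δ`
and `p_b + q_b ≤ 1`. Such a sum of two products is largest when every factor is extreme, which
an induction on `B` shows: pairing the larger of the two partial products with `1/2 + Δ` and
the smaller with `1/2 - Δ` gives `∏ p_b + ∏ q_b ≤ (1/2 - Δ)^B + (1/2 + Δ)^B`.
-/

open MeasureTheory ProbabilityTheory Matrix Finset

theorem mul_add_mul_le_pow_succ_add_pow_succ {a p q P Q : ℝ} {n : ℕ} (ha : 0 ≤ a)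
    (h2a : 2 * a ≤ 1) (hq : a ≤ q) (hpq : p + q ≤ 1) (hQ : 0 ≤ Q) (hQP : Q ≤ P)
    (hP : P ≤ (1 - a) ^ n) (hPQ : P + Q ≤ a ^ n + (1 - a) ^ n) :
    p * P + q * Q ≤ a ^ (n + 1) + (1 - a) ^ (n + 1) :=
  calc p * P + q * Q ≤ (1 - q) * P + q * Q := by nlinarith
    _ ≤ a * (P + Q) + (1 - 2 * a) * P := by nlinarith
    _ ≤ a * (a ^ n + (1 - a) ^ n) + (1 - 2 * a) * (1 - a) ^ n := by gcongr
    _ = a ^ (n + 1) + (1 - a) ^ (n + 1) := by ring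

theorem prod_le_one_sub_pow_card {ι : Type*} (s : Finset ι) {p q : ι → ℝ} {a : ℝ}
    (ha : 0 ≤ a) (hp : ∀ i ∈ s, a ≤ p i) (hq : ∀ i ∈ s, a ≤ q i)
    (hpq : ∀ i ∈ s, p i + q i ≤ 1) : ∏ i ∈ s, p i ≤ (1 - a) ^ #s :=
  calc ∏ i ∈ s, p i ≤ ∏ _i ∈ s, (1 - a) :=
        prod_le_prod (fun i hi ↦ ha.trans (hp i hi)) fun i hi ↦ by linarith [hq i hi, hpq i hi]
    _ = (1 - a) ^ #s := prod_const _

theorem prod_add_prod_le_pow_add_pow {ι : Type*} (s : Finset ι) {p q : ι → ℝ} {a : ℝ}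
    (ha : 0 ≤ a) (hp : ∀ i ∈ s, a ≤ p i) (hq : ∀ i ∈ s, a ≤ q i)
    (hpq : ∀ i ∈ s, p i + q i ≤ 1) :
    ∏ i ∈ s, p i + ∏ i ∈ s, q i ≤ a ^ #s + (1 - a) ^ #s := by
  classical
  induction s using Finset.induction_on with
  | empty => norm_num
  | insert j s hj ih =>
    simp only [forall_mem_insert] at hp hq hpq
    rw [prod_insert hj, prod_insert hj, card_insert_of_notMem hj]
    have h2a : 2 * a ≤ 1 := by linarith [hp.1, hq.1, hpq.1]
    have hP0 : 0 ≤ ∏ i ∈ s, p i := prod_nonneg fun i hi ↦ ha.trans (hp.2 i hi)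
    have hQ0 : 0 ≤ ∏ i ∈ s, q i := prod_nonneg fun i hi ↦ ha.trans (hq.2 i hi)
    have hP := prod_le_one_sub_pow_card s ha hp.2 hq.2 hpq.2
    have hQ := prod_le_one_sub_pow_card s ha hq.2 hp.2 fun i hi ↦
      (add_comm _ _).trans_le (hpq.2 i hi)
    have hIH := ih hp.2 hq.2 hpq.2
    rcases le_total (∏ i ∈ s, q i) (∏ i ∈ s, p i) with hQP | hPQ
    · exact mul_add_mul_le_pow_succ_add_pow_succ ha h2a hq.1 hpq.1 hQ0 hQP hP hIH
    · rw [add_comm]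
      exact mul_add_mul_le_pow_succ_add_pow_succ ha h2a hp.1 ((add_comm _ _).trans_le hpq.1)
        hP0 hPQ hQ ((add_comm _ _).trans_le hIH)

theorem ProbabilityTheory.iIndepFun.measureReal_iInter_preimage {Ω ι β : Type*}
    [MeasurableSpace Ω] [MeasurableSpace β] [Fintype ι] {μ : Measure Ω} {X : ι → Ω → β}
    (h : iIndepFun X μ) {S : ι → Set β} (hS : ∀ i, MeasurableSet (S i)) :
    μ.real (⋂ i, X i ⁻¹' S i) = ∏ i, μ.real (X i ⁻¹' S i) := by
  rw [measureReal_def, h.meas_iInter fun i ↦ ⟨_, hS i, rfl⟩, ENNReal.toReal_prod]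
  rfl

theorem compl_setOf_exists_le_and_exists_ge {Ω ι : Type*} {X : ι → Ω → ℝ} {θ : ℝ} :
    {ω | (∃ i, X i ω ≤ θ) ∧ ∃ i, θ ≤ X i ω}ᶜ =
      (⋂ i, {ω | θ < X i ω}) ∪ ⋂ i, {ω | X i ω < θ} := by
  ext ω
  simp only [Set.mem_compl_iff, Set.mem_ofPred_eq, Set.mem_union, Set.mem_iInter, not_and_or,
    not_exists, not_le]

section
variable {Ω ι : Type*} [MeasurableSpace Ω] {μ : Measure Ω} {X : ι → Ω → ℝ} {θ : ℝ}

theorem measureReal_gt_add_measureReal_lt_le_one [IsProbabilityMeasure μ] {Y : Ω → ℝ}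
    (hY : Measurable Y) : μ.real {ω | θ < Y ω} + μ.real {ω | Y ω < θ} ≤ 1 := by
  rw [← measureReal_union _ (measurableSet_lt hY measurable_const)]
  · exact measureReal_le_one
  · exact Set.disjoint_left.2 fun ω h h' ↦ lt_asymm (α := ℝ) h h'

theorem hulc_coverage [Fintype ι] [IsProbabilityMeasure μ] (hX : ∀ i, Measurable (X i))
    (hindep : iIndepFun X μ) {a : ℝ} (ha : 0 ≤ a) (hgt : ∀ i, a ≤ μ.real {ω | θ < X i ω})
    (hlt : ∀ i, a ≤ μ.real {ω | X i ω < θ}) :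
    1 - a ^ Fintype.card ι - (1 - a) ^ Fintype.card ι ≤
      μ.real {ω | (∃ i, X i ω ≤ θ) ∧ ∃ i, θ ≤ X i ω} := by
  set E := {ω | (∃ i, X i ω ≤ θ) ∧ ∃ i, θ ≤ X i ω}
  have hcompl : μ.real Eᶜ ≤ ∏ i, μ.real {ω | θ < X i ω} + ∏ i, μ.real {ω | X i ω < θ} := by
    rw [compl_setOf_exists_le_and_exists_ge]
    refine (measureReal_union_le _ _).trans_eq ?_
    congr 1
    exacts [hindep.measureReal_iInter_preimage fun _ ↦ measurableSet_Ioi,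
      hindep.measureReal_iInter_preimage fun _ ↦ measurableSet_Iio]
  have hprod := prod_add_prod_le_pow_add_pow univ ha (fun i _ ↦ hgt i) (fun i _ ↦ hlt i)
    fun i _ ↦ measureReal_gt_add_measureReal_lt_le_one (hX i)
  have hunion : 1 ≤ μ.real E + μ.real Eᶜ := by
    simpa [Set.union_compl_self] using measureReal_union_le (μ := μ) E Eᶜ
  rw [card_univ] at hprod
  linarith
end

theorem stmt11_general {Ω : Type*} [MeasurableSpace Ω] (μ : Measure Ω) [IsProbabilityMeasure μ]
    {d B : ℕ} (c β : Fin d → ℝ)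
    (bhat : Fin B → Ω → Fin d → ℝ) (hmeas : ∀ b, Measurable (bhat b))
    (hindep : iIndepFun bhat μ)
    (Δ : ℝ) (hΔ1 : Δ ≤ 1 / 2)
    (hbias : ∀ b, 1 / 2 -
        min ((μ {ω | 0 < c ⬝ᵥ bhat b ω - c ⬝ᵥ β}).toReal)
            ((μ {ω | c ⬝ᵥ bhat b ω - c ⬝ᵥ β < 0}).toReal) ≤ Δ) :
    1 - (1 / 2 - Δ) ^ B - (1 / 2 + Δ) ^ B ≤
      (μ {ω | (∃ b, c ⬝ᵥ bhat b ω ≤ c ⬝ᵥ β) ∧ ∃ b, c ⬝ᵥ β ≤ c ⬝ᵥ bhat b ω}).toReal := by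
  have hdot : Measurable fun v : Fin d → ℝ ↦ c ⬝ᵥ v := by fun_prop
  have hmedian (b : Fin B) : 1 / 2 - Δ ≤ μ.real {ω | c ⬝ᵥ β < c ⬝ᵥ bhat b ω} ∧
      1 / 2 - Δ ≤ μ.real {ω | c ⬝ᵥ bhat b ω < c ⬝ᵥ β} := by
    simpa only [sub_pos, sub_neg, min_le_iff, le_min_iff, measureReal_def] using
      (sub_le_comm.1 (hbias b))
  have := hulc_coverage (μ := μ) (θ := c ⬝ᵥ β) (fun b ↦ hdot.comp (hmeas b))
    (hindep.comp (fun _ v ↦ c ⬝ᵥ v) fun _ ↦ hdot) (by linarith) (fun b ↦ (hmedian b).1)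
    fun b ↦ (hmedian b).2
  rw [Fintype.card_fin, show 1 - (1 / 2 - Δ) = 1 / 2 + Δ by ring] at this
  exact this

/-- HulC coverage lemma: if the independent estimators
`β̂⁽¹⁾, …, β̂⁽ᴮ⁾` each have median bias at most `Δ ∈ [0, 1/2]` along `c`, then the convex
hull of `cᵀβ̂⁽ᵇ⁾` covers `cᵀβ` with probability at least `1 - (1/2-Δ)^B - (1/2+Δ)^B`. -/
theorem stmt11 {Ω : Type*} [MeasurableSpace Ω] (μ : Measure Ω) [IsProbabilityMeasure μ]
    {d B : ℕ} (hB : 1 ≤ B) (c β : Fin d → ℝ)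
    (bhat : Fin B → Ω → Fin d → ℝ) (hmeas : ∀ b, Measurable (bhat b))
    (hindep : iIndepFun bhat μ)
    (Δ : ℝ) (hΔ0 : 0 ≤ Δ) (hΔ1 : Δ ≤ 1 / 2)
    (hbias : ∀ b, 1 / 2 -
        min ((μ {ω | 0 < c ⬝ᵥ bhat b ω - c ⬝ᵥ β}).toReal)
            ((μ {ω | c ⬝ᵥ bhat b ω - c ⬝ᵥ β < 0}).toReal) ≤ Δ) :
    1 - (1 / 2 - Δ) ^ B - (1 / 2 + Δ) ^ B ≤
      (μ {ω | (∃ b, c ⬝ᵥ bhat b ω ≤ c ⬝ᵥ β) ∧ ∃ b, c ⬝ᵥ β ≤ c ⬝ᵥ bhat b ω}).toReal :=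
  stmt11_general μ c β bhat hmeas hindep Δ hΔ1 hbias
end

section
/- Let $T$ be a real random variable, $\hat\sigma > 0$ and $\sigma > 0$ random and deterministic positive scalars respectively, and $N: \mathbb{R} \to [0,1]$ a differentiable function with $\sup_{x}|x N'(x)| \leq \kappa < \infty$. Suppose $\sup_{t}|\mathbb{P}(T/\sigma \leq t) - N(t)| \leq \epsilon$. Then for any $\delta \in (0, 1/2]$: $\sup_{t \in \mathbb{R}}\left|\mathbb{P}\left(\frac{T}{\hat\sigma} \leq t\right) - N(t)\right| \leq \epsilon + \frac{2\kappa\delta}{1-\delta} + \mathbb{P}\left(\left|\frac{\hat\sigma}{\sigma} - 1\right| > \delta\right)$. -/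
/-!
On the event `|σ̂/σ - 1| ≤ δ` we have `T/σ̂ ≤ t ↔ T/σ ≤ (σ̂/σ) t`, and `(σ̂/σ) t` lies between
`(1 - δ) t` and `(1 + δ) t`. Hence `P(T/σ̂ ≤ t)` is squeezed, up to `P(|σ̂/σ - 1| > δ)`, between
`P(T/σ ≤ (1 ∓ δ) t)`, which are `ε`-close to `N((1 ∓ δ) t)`. Finally `|N(u t) - N(t)| ≤ κδ/(1-δ)`
for `|u - 1| ≤ δ` by the mean value theorem applied to `v ↦ N(v t)`, whose derivative
`t N'(v t) = (v t) N'(v t) / v` is bounded by `κ / (1 - δ)` on `[1 - δ, 1 + δ]`.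
-/

open MeasureTheory Set

lemma abs_comp_mul_sub_le_of_abs_mul_deriv_le {N : ℝ → ℝ} (hN : Differentiable ℝ N) {κ : ℝ}
    (hκ : ∀ x, |x * deriv N x| ≤ κ) {δ u : ℝ} (hδ : δ < 1) (hu : |u - 1| ≤ δ) (t : ℝ) :
    |N (u * t) - N t| ≤ κ * δ / (1 - δ) := by
  have hδ0 : 0 ≤ δ := (abs_nonneg _).trans hu
  have hκ0 : 0 ≤ κ := by simpa using hκ 0
  have h1δ : 0 < 1 - δ := by linarith
  have hderiv : ∀ v, HasDerivAt (fun v => N (v * t)) (deriv N (v * t) * t) v := fun v =>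
    (hN (v * t)).hasDerivAt.comp v (hasDerivAt_mul_const t)
  have hbound : ∀ v ∈ Icc (1 - δ) (1 + δ), ‖deriv N (v * t) * t‖ ≤ κ / (1 - δ) := by
    rintro v ⟨hv, -⟩
    have hv0 : 0 < v := h1δ.trans_le hv
    rw [Real.norm_eq_abs, le_div_iff₀ h1δ]
    calc |deriv N (v * t) * t| * (1 - δ) ≤ |deriv N (v * t) * t| * v := by gcongr
      _ = |v * t * deriv N (v * t)| := by rw [abs_mul, abs_mul, abs_mul, abs_of_pos hv0]; ring
      _ ≤ κ := hκ _
  have hmem : ∀ {w}, |w - 1| ≤ δ → w ∈ Icc (1 - δ) (1 + δ) := fun hw => by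
    obtain ⟨h₁, h₂⟩ := abs_le.mp hw
    constructor <;> linarith
  have hmvt := (convex_Icc (1 - δ) (1 + δ)).norm_image_sub_le_of_norm_hasDerivWithin_le
    (fun v _ => (hderiv v).hasDerivWithinAt) hbound (hmem (w := 1) (by simpa using hδ0)) (hmem hu)
  rw [one_mul, Real.norm_eq_abs, Real.norm_eq_abs] at hmvt
  calc |N (u * t) - N t| ≤ κ / (1 - δ) * |u - 1| := hmvt
    _ ≤ κ / (1 - δ) * δ := by gcongr
    _ = κ * δ / (1 - δ) := by ring

lemma exists_scale_bounds (t : ℝ) {δ : ℝ} (hδ : 0 ≤ δ) :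
    ∃ lo hi : ℝ, |lo - 1| ≤ δ ∧ |hi - 1| ≤ δ ∧
      ∀ r, |r - 1| ≤ δ → lo * t ≤ r * t ∧ r * t ≤ hi * t := by
  have hminus : |1 - δ - 1| ≤ δ := by rw [sub_sub_cancel_left, abs_neg, abs_of_nonneg hδ]
  have hplus : |1 + δ - 1| ≤ δ := by rw [add_sub_cancel_left, abs_of_nonneg hδ]
  rcases le_total 0 t with ht | ht
  · refine ⟨1 - δ, 1 + δ, hminus, hplus, fun r hr => ?_⟩
    obtain ⟨h₁, h₂⟩ := abs_le.mp hr
    constructor <;> nlinarith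
  · refine ⟨1 + δ, 1 - δ, hplus, hminus, fun r hr => ?_⟩
    obtain ⟨h₁, h₂⟩ := abs_le.mp hr
    constructor <;> nlinarith

lemma div_le_iff_div_le_div_mul {x s s' t : ℝ} (hs : 0 < s) (hs' : 0 < s') :
    x / s' ≤ t ↔ x / s ≤ s' / s * t := by
  rw [div_le_iff₀ hs', div_le_iff₀ hs, div_mul_eq_mul_div, div_mul_cancel₀ _ hs.ne', mul_comm]

lemma measureReal_le_add_of_subset_union {Ω : Type*} [MeasurableSpace Ω] {μ : Measure Ω}
    [IsFiniteMeasure μ] {A S B : Set Ω} (h : A ⊆ S ∪ B) : μ.real A ≤ μ.real S + μ.real B :=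
  (measureReal_mono h).trans (measureReal_union_le S B)

theorem stmt17_general {Ω : Type*} [MeasurableSpace Ω] (μ : Measure Ω) [IsProbabilityMeasure μ]
    (T : Ω → ℝ) (shat : Ω → ℝ) (hshat : ∀ ω, 0 < shat ω)
    (s : ℝ) (hs : 0 < s)
    (N : ℝ → ℝ) (hNd : Differentiable ℝ N)
    (κ : ℝ) (hκ : ∀ x, |x * deriv N x| ≤ κ)
    (ε : ℝ) (hε : ∀ t, |(μ {ω | T ω / s ≤ t}).toReal - N t| ≤ ε)
    (δ : ℝ) (hδ0 : 0 < δ) (hδ1 : δ ≤ 1 / 2) :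
    ∀ t, |(μ {ω | T ω / shat ω ≤ t}).toReal - N t| ≤
      ε + 2 * κ * δ / (1 - δ) + (μ {ω | δ < |shat ω / s - 1|}).toReal := by
  intro t
  obtain ⟨lo, hi, hlo, hhi, hscale⟩ := exists_scale_bounds t hδ0.le
  have hdiv (ω) := div_le_iff_div_le_div_mul (x := T ω) (t := t) hs (hshat ω)
  have hupper : {ω | T ω / shat ω ≤ t} ⊆ {ω | T ω / s ≤ hi * t} ∪ {ω | δ < |shat ω / s - 1|} :=
    fun ω hω => or_iff_not_imp_right.mpr fun hgood =>
      ((hdiv ω).mp hω).trans (hscale _ (not_lt.mp hgood)).2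
  have hlower : {ω | T ω / s ≤ lo * t} ⊆ {ω | T ω / shat ω ≤ t} ∪ {ω | δ < |shat ω / s - 1|} :=
    fun ω hω => or_iff_not_imp_right.mpr fun hgood =>
      (hdiv ω).mpr (le_trans hω (hscale _ (not_lt.mp hgood)).1)
  have hδ1' : δ < 1 := by linarith
  have hNhi := abs_le.mp (abs_comp_mul_sub_le_of_abs_mul_deriv_le hNd hκ hδ1' hhi t)
  have hNlo := abs_le.mp (abs_comp_mul_sub_le_of_abs_mul_deriv_le hNd hκ hδ1' hlo t)
  have hεhi := abs_le.mp (hε (hi * t))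
  have hεlo := abs_le.mp (hε (lo * t))
  have hslack : κ * δ / (1 - δ) ≤ 2 * κ * δ / (1 - δ) := by
    have hκ0 : 0 ≤ κ := by simpa using hκ 0
    gcongr
    nlinarith
  have hPhi := measureReal_le_add_of_subset_union (μ := μ) hupper
  have hPlo := measureReal_le_add_of_subset_union (μ := μ) hlower
  simp only [measureReal_def] at hPhi hPlo
  rw [abs_le]
  constructor <;> linarith

/-- Studentization lemma: if `sup_t |P(T/σ ≤ t) - N(t)| ≤ ε` where `N` is
differentiable with `sup_x |x N'(x)| ≤ κ` and values in `[0,1]`, then for `δ ∈ (0, 1/2]`,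
`sup_t |P(T/σ̂ ≤ t) - N(t)| ≤ ε + 2κδ/(1-δ) + P(|σ̂/σ - 1| > δ)`. -/
theorem stmt17 {Ω : Type*} [MeasurableSpace Ω] (μ : Measure Ω) [IsProbabilityMeasure μ]
    (T : Ω → ℝ) (shat : Ω → ℝ) (hshat : ∀ ω, 0 < shat ω)
    (s : ℝ) (hs : 0 < s)
    (N : ℝ → ℝ) (hNd : Differentiable ℝ N)
    (hNrange : ∀ x, N x ∈ Set.Icc (0 : ℝ) 1)
    (κ : ℝ) (hκ : ∀ x, |x * deriv N x| ≤ κ)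
    (ε : ℝ) (hε : ∀ t, |(μ {ω | T ω / s ≤ t}).toReal - N t| ≤ ε)
    (δ : ℝ) (hδ0 : 0 < δ) (hδ1 : δ ≤ 1 / 2) :
    ∀ t, |(μ {ω | T ω / shat ω ≤ t}).toReal - N t| ≤
      ε + 2 * κ * δ / (1 - δ) + (μ {ω | δ < |shat ω / s - 1|}).toReal :=
  stmt17_general μ T shat hshat s hs N hNd κ hκ ε hε δ hδ0 hδ1
end
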